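/- arXiv:2110.03018 — 3 statements merged into one kernel-verified Lean document; each statement's English description precedes it below -/
import Mathlib

section
/- In the linear inverse demand Nash-Cournot game, the partial derivative of player j's profit with respect to her own quantity x_{jr} coincides with the partial derivative of the monolithic objective: for p̃_j(x_j, x_{−j}) = ∑_r (α_r − β_r ∑_i x_{ir}) x_{jr} − C_jᵀ x_j and p̃^{Mono}(x) = ∑_j ∑_r [α_r − β_r(x_{jr} + ½ ∑_{i ≠ j} x_{ir})] x_{jr} − ∑_j C_jᵀ x_j, one has ∂p̃_j/∂x_{jr} = ∂p̃^{Mono}/∂x_{jr} = α_r − β_r(2 x_{jr} + ∑_{i≠j} x_{ir}) − C_{jr} for every player j and market r. -/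
/-- In the linear inverse demand Nash-Cournot game, the partial derivative of player j's
profit with respect to her own quantity x_{jr} coincides with the corresponding partial
derivative of the monolithic objective, both equal to
α_r - β_r (2 x_{jr} + ∑_{i≠j} x_{ir}) - C_{jr}. -/
theorem stmt11 {J R : Type*} [Fintype J] [Fintype R] [DecidableEq J] [DecidableEq R]
    (α β : R → ℝ) (C : J → R → ℝ) (x : J → R → ℝ) (j : J) (r : R) :
    HasDerivAt (fun t : ℝ =>
        (∑ r', (α r' - β r' * ∑ i, Function.update x j (Function.update (x j) r t) i r')
            * Function.update x j (Function.update (x j) r t) j r')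
          - ∑ r', C j r' * Function.update x j (Function.update (x j) r t) j r')
      (α r - β r * (2 * x j r + ∑ i ∈ Finset.univ.erase j, x i r) - C j r) (x j r)
    ∧
    HasDerivAt (fun t : ℝ =>
        (∑ i, ∑ r', (α r' - β r' * (Function.update x j (Function.update (x j) r t) i r'
              + (1 / 2) * ∑ k ∈ Finset.univ.erase i,
                  Function.update x j (Function.update (x j) r t) k r'))
            * Function.update x j (Function.update (x j) r t) i r')
          - ∑ i, ∑ r', C i r' * Function.update x j (Function.update (x j) r t) i r')
      (α r - β r * (2 * x j r + ∑ i ∈ Finset.univ.erase j, x i r) - C j r) (x j r) := by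
  refine ⟨?_, ?_⟩
  · -- player objective
      set S := ∑ i ∈ Finset.univ.erase j, x i r with hS
      have hsum : ∀ t : ℝ, (∑ i, if i = j then t else x i r) = t + S := by
        intro t
        rw [← Finset.add_sum_erase _ _ (Finset.mem_univ j)]
        simp only [if_pos rfl]
        congr 1
        exact Finset.sum_congr rfl fun i hi => if_neg (Finset.ne_of_mem_erase hi)
      have key : (fun t : ℝ =>
            (∑ r', (α r' - β r' * ∑ i, Function.update x j (Function.update (x j) r t) i r')
                * Function.update x j (Function.update (x j) r t) j r')
              - ∑ r', C j r' * Function.update x j (Function.update (x j) r t) j r')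
          = fun t : ℝ =>
            ((∑ r' ∈ Finset.univ.erase r,
                ((α r' - β r' * ∑ i, x i r') * x j r' - C j r' * x j r'))
              + ((α r - β r * (t + S)) * t - C j r * t)) := by
        funext t
        rw [← Finset.sum_sub_distrib, ← Finset.add_sum_erase _ _ (Finset.mem_univ r), add_comm]
        congr 1
        · refine Finset.sum_congr rfl fun r' hr' => ?_
          have hne : r' ≠ r := Finset.ne_of_mem_erase hr'
          simp only [Function.update_apply, apply_ite (fun f : R → ℝ => f r'), hne, if_neg,
            if_false]
          rw [Finset.sum_congr rfl fun i _ => show (if i = j then x j r' else x i r') = x i r' by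
            rcases eq_or_ne i j with h | h <;> simp [h]]
          simp
        · simp only [Function.update_apply, apply_ite (fun f : R → ℝ => f r), if_pos rfl,
            Function.update_self, hsum, if_true]
      rw [key]
      have h1 : HasDerivAt (fun t : ℝ => (α r - β r * (t + S)) * t - C j r * t)
          (α r - β r * (2 * x j r + S) - C j r) (x j r) := by
        have ha : HasDerivAt (fun t : ℝ => α r - β r * (t + S)) (-β r) (x j r) := by
          have := ((hasDerivAt_id (x j r)).add_const S).const_mul (β r)
          simpa using (hasDerivAt_const (x j r) (α r)).fun_sub this
        have hb := (ha.fun_mul (hasDerivAt_id (x j r))).fun_sub ((hasDerivAt_id (x j r)).const_mul (C j r))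
        refine hb.congr_deriv ?_
        simp only [id_eq]
        ring
      simpa using h1.const_add (∑ r' ∈ Finset.univ.erase r, ((α r' - β r' * ∑ i, x i r') * x j r' - C j r' * x j r'))
  · -- monolithic objective
      classical
      set t₀ := x j r with ht₀
      set S := ∑ i ∈ Finset.univ.erase j, x i r with hS
      have hu : ∀ (t : ℝ) (i : J) (r' : R),
          Function.update x j (Function.update (x j) r t) i r'
            = if i = j then (if r' = r then t else x j r') else x i r' := by
        intro t i r'
        rcases eq_or_ne i j with h | h <;> simp [Function.update_apply, h]
      -- derivative of the cost part
      have hG : HasDerivAt (fun t : ℝ =>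
          ∑ i, ∑ r', C i r' * Function.update x j (Function.update (x j) r t) i r')
          (C j r) t₀ := by
        have h1 : ∀ i : J, HasDerivAt (fun t : ℝ =>
            ∑ r', C i r' * Function.update x j (Function.update (x j) r t) i r')
            (if i = j then C j r else 0) t₀ := by
          intro i
          rcases eq_or_ne i j with h | h
          · subst h
            have : (fun t : ℝ => ∑ r', C i r' * Function.update x i (Function.update (x i) r t) i r')
                = fun t : ℝ => ∑ r', (if r' = r then C i r * t else C i r' * x i r') := by
              funext t
              refine Finset.sum_congr rfl fun r' _ => ?_
              simp only [hu, if_pos rfl]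
              rcases eq_or_ne r' r with h2 | h2 <;> simp [h2]
            rw [this, if_pos rfl]
            have h3 : ∀ r' : R, HasDerivAt (fun t : ℝ => if r' = r then C i r * t else C i r' * x i r')
                (if r' = r then C i r else 0) t₀ := by
              intro r'
              rcases eq_or_ne r' r with h2 | h2
              · subst h2
                simp only [eq_self_iff_true, if_true]
                simpa using (hasDerivAt_id t₀).const_mul (C i r')
              · simp only [if_neg h2]
                exact hasDerivAt_const _ _
            have := HasDerivAt.fun_sum (u := Finset.univ) (fun r' _ => h3 r')
            simpa [Finset.sum_ite_eq'] using this
          · have : (fun t : ℝ => ∑ r', C i r' * Function.update x j (Function.update (x j) r t) i r')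
                = fun _ : ℝ => ∑ r', C i r' * x i r' := by
              funext t
              exact Finset.sum_congr rfl fun r' _ => by simp [hu, h]
            rw [this, if_neg h]
            exact hasDerivAt_const _ _
        have := HasDerivAt.fun_sum (u := Finset.univ) (fun i (_ : i ∈ Finset.univ) => h1 i)
        simpa [Finset.sum_ite_eq'] using this
      -- derivative of the revenue part
      have hF : HasDerivAt (fun t : ℝ =>
          ∑ i, ∑ r', (α r' - β r' * (Function.update x j (Function.update (x j) r t) i r'
                  + (1 / 2) * ∑ k ∈ Finset.univ.erase i,
                      Function.update x j (Function.update (x j) r t) k r'))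
                * Function.update x j (Function.update (x j) r t) i r')
          (α r - β r * (2 * t₀ + S)) t₀ := by
        have h1 : ∀ i : J, HasDerivAt (fun t : ℝ =>
            ∑ r', (α r' - β r' * (Function.update x j (Function.update (x j) r t) i r'
                  + (1 / 2) * ∑ k ∈ Finset.univ.erase i,
                      Function.update x j (Function.update (x j) r t) k r'))
                * Function.update x j (Function.update (x j) r t) i r')
            (if i = j then α r - β r * (2 * t₀ + (1/2) * S) else -(1/2) * β r * x i r) t₀ := by
          intro i
          rcases eq_or_ne i j with h | h
          · subst h
            -- i = j case
            have hin : ∀ t : ℝ, ∀ r', (∑ k ∈ Finset.univ.erase i,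
                Function.update x i (Function.update (x i) r t) k r') = ∑ k ∈ Finset.univ.erase i, x k r' := by
              intro t r'
              exact Finset.sum_congr rfl fun k hk => by
                simp [hu, Finset.ne_of_mem_erase hk]
            have key : (fun t : ℝ =>
                ∑ r', (α r' - β r' * (Function.update x i (Function.update (x i) r t) i r'
                  + (1 / 2) * ∑ k ∈ Finset.univ.erase i,
                      Function.update x i (Function.update (x i) r t) k r'))
                * Function.update x i (Function.update (x i) r t) i r')
                = fun t : ℝ => ∑ r', (if r' = r then
                    (α r - β r * (t + (1/2) * S)) * t
                  else (α r' - β r' * (x i r' + (1/2) * ∑ k ∈ Finset.univ.erase i, x k r')) * x i r') := by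
              funext t
              refine Finset.sum_congr rfl fun r' _ => ?_
              rw [hin]
              simp only [hu, if_pos rfl]
              rcases eq_or_ne r' r with h2 | h2 <;> simp [h2, hS]
            rw [key, if_pos rfl]
            have h3 : ∀ r' : R, HasDerivAt (fun t : ℝ => if r' = r then
                    (α r - β r * (t + (1/2) * S)) * t
                  else (α r' - β r' * (x i r' + (1/2) * ∑ k ∈ Finset.univ.erase i, x k r')) * x i r')
                (if r' = r then α r - β r * (2 * t₀ + (1/2) * S) else 0) t₀ := by
              intro r'
              rcases eq_or_ne r' r with h2 | h2
              · subst h2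
                simp only [↓reduceIte]
                have ha : HasDerivAt (fun t : ℝ => α r' - β r' * (t + (1/2) * S)) (-β r') t₀ := by
                  have := ((hasDerivAt_id t₀).add_const ((1/2) * S)).const_mul (β r')
                  simpa using (hasDerivAt_const t₀ (α r')).fun_sub this
                have hb := ha.fun_mul (hasDerivAt_id t₀)
                refine hb.congr_deriv ?_
                simp only [id_eq, if_true, eq_self_iff_true]
                ring
              · simp only [if_neg h2]
                exact hasDerivAt_const _ _
            have := HasDerivAt.fun_sum (u := Finset.univ) (fun r' (_ : r' ∈ Finset.univ) => h3 r')
            simpa [Finset.sum_ite_eq'] using this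
          · -- i ≠ j case
            have hj : j ∈ Finset.univ.erase i := Finset.mem_erase.mpr ⟨Ne.symm h, Finset.mem_univ j⟩
            have hin : ∀ t : ℝ, (∑ k ∈ Finset.univ.erase i,
                Function.update x j (Function.update (x j) r t) k r)
                = t + ∑ k ∈ (Finset.univ.erase i).erase j, x k r := by
              intro t
              rw [← Finset.add_sum_erase _ _ hj]
              congr 1
              · simp [hu]
              · exact Finset.sum_congr rfl fun k hk => by
                  simp [hu, Finset.ne_of_mem_erase hk]
            have hin' : ∀ t : ℝ, ∀ r', r' ≠ r → (∑ k ∈ Finset.univ.erase i,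
                Function.update x j (Function.update (x j) r t) k r')
                = ∑ k ∈ Finset.univ.erase i, x k r' := by
              intro t r' h2
              refine Finset.sum_congr rfl fun k hk => ?_
              rcases eq_or_ne k j with rfl | hk3 <;> simp [hu, h2, *]
            have key : (fun t : ℝ =>
                ∑ r', (α r' - β r' * (Function.update x j (Function.update (x j) r t) i r'
                  + (1 / 2) * ∑ k ∈ Finset.univ.erase i,
                      Function.update x j (Function.update (x j) r t) k r'))
                * Function.update x j (Function.update (x j) r t) i r')
                = fun t : ℝ => ∑ r', (if r' = r then
                    (α r - β r * (x i r + (1/2) * (t + ∑ k ∈ (Finset.univ.erase i).erase j, x k r))) * x i r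
                  else (α r' - β r' * (x i r' + (1/2) * ∑ k ∈ Finset.univ.erase i, x k r')) * x i r') := by
              funext t
              refine Finset.sum_congr rfl fun r' _ => ?_
              rcases eq_or_ne r' r with h2 | h2
              · subst h2
                rw [hin]
                simp [hu, h]
              · rw [hin' t r' h2]
                simp [hu, h, h2]
            rw [key, if_neg h]
            have h3 : ∀ r' : R, HasDerivAt (fun t : ℝ => if r' = r then
                    (α r - β r * (x i r + (1/2) * (t + ∑ k ∈ (Finset.univ.erase i).erase j, x k r))) * x i r
                  else (α r' - β r' * (x i r' + (1/2) * ∑ k ∈ Finset.univ.erase i, x k r')) * x i r')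
                (if r' = r then -(1/2) * β r * x i r else 0) t₀ := by
              intro r'
              rcases eq_or_ne r' r with h2 | h2
              · subst h2
                simp only [↓reduceIte]
                set T := ∑ k ∈ (Finset.univ.erase i).erase j, x k r'
                have ha : HasDerivAt (fun t : ℝ => α r' - β r' * (x i r' + (1/2) * (t + T)))
                    (-((1/2) * β r')) t₀ := by
                  have h4 : HasDerivAt (fun t : ℝ => x i r' + (1/2) * (t + T)) ((1:ℝ)/2) t₀ := by
                    have := ((hasDerivAt_id t₀).add_const T).const_mul ((1:ℝ)/2)
                    simpa using this.const_add (x i r')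
                  have := h4.const_mul (β r')
                  have h5 := (hasDerivAt_const t₀ (α r')).fun_sub this
                  refine h5.congr_deriv ?_
                  ring
                have hb := ha.mul_const (x i r')
                refine hb.congr_deriv ?_
                ring
              · simp only [if_neg h2]
                exact hasDerivAt_const _ _
            have := HasDerivAt.fun_sum (u := Finset.univ) (fun r' (_ : r' ∈ Finset.univ) => h3 r')
            simpa [Finset.sum_ite_eq'] using this
        have hsum := HasDerivAt.fun_sum (u := Finset.univ) (fun i (_ : i ∈ Finset.univ) => h1 i)
        have hval : (∑ i : J, (if i = j then α r - β r * (2 * t₀ + (1/2) * S)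
            else -(1/2) * β r * x i r)) = α r - β r * (2 * t₀ + S) := by
          rw [← Finset.add_sum_erase _ _ (Finset.mem_univ j), if_pos rfl]
          rw [Finset.sum_congr rfl fun i hi => if_neg (Finset.ne_of_mem_erase hi)]
          rw [show (∑ i ∈ Finset.univ.erase j, -(1/2) * β r * x i r) = -(1/2) * β r * S by
            rw [hS, Finset.mul_sum]]
          ring
        rwa [hval] at hsum
      exact hF.sub hG
end

section
/- Any feasible point of the binary knapsack Nash-Cournot game admits KKT multipliers for the complementarity reformulation: let x̂ = (x̂_1,…,x̂_N) with x̂_j ∈ {0,1}^{n_j} and ∑_l a_{jl} x̂_{jl} ≤ b_j for all j. Then there exist multipliers π̂_j ≥ 0, γ̂_{jl} ∈ ℝ, μ̂_{jl} ≥ 0, ν̂_{jl} ≥ 0 satisfying: (i) α_l − C_{jl} − β_l ∑_{i≠j} x̂_{il} − 2β_l x̂_{jl} − π̂_j a_{jl} + γ̂_{jl} − 2γ̂_{jl} x̂_{jl} − μ̂_{jl} + ν̂_{jl} = 0 for all j, l; (ii) 0 ≤ b_j − ∑_l a_{jl} x̂_{jl}, π̂_j ≥ 0, π̂_j (b_j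 − ∑_l a_{jl} x̂_{jl}) = 0; (iii) γ̂_{jl} x̂_{jl}(1 − x̂_{jl}) = 0; (iv) 0 ≤ 1 − x̂_{jl} ⟂ μ̂_{jl} ≥ 0; (v) 0 ≤ x̂_{jl} ⟂ ν̂_{jl} ≥ 0. -/
/-- Any feasible point of the binary knapsack Nash-Cournot game admits KKT multipliers for
the complementarity reformulation. -/
theorem stmt12 {J L : Type*} [Fintype J] [Fintype L] [DecidableEq J]
    (α β : L → ℝ) (C a : J → L → ℝ) (b : J → ℝ) (hb : ∀ j, 0 ≤ b j)
    (xh : J → L → ℝ)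
    (hbin : ∀ j l, xh j l = 0 ∨ xh j l = 1)
    (hknap : ∀ j, ∑ l, a j l * xh j l ≤ b j) :
    ∃ (πm : J → ℝ) (γ μ ν : J → L → ℝ),
      (∀ j, 0 ≤ πm j) ∧ (∀ j l, 0 ≤ μ j l) ∧ (∀ j l, 0 ≤ ν j l) ∧
      (∀ j l, α l - C j l - β l * (∑ i ∈ Finset.univ.erase j, xh i l) - 2 * β l * xh j l
          - πm j * a j l + γ j l - 2 * γ j l * xh j l - μ j l + ν j l = 0) ∧
      (∀ j, 0 ≤ b j - ∑ l, a j l * xh j l) ∧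
      (∀ j, πm j * (b j - ∑ l, a j l * xh j l) = 0) ∧
      (∀ j l, γ j l * (xh j l * (1 - xh j l)) = 0) ∧
      (∀ j l, 0 ≤ 1 - xh j l ∧ μ j l * (1 - xh j l) = 0) ∧
      (∀ j l, 0 ≤ xh j l ∧ ν j l * xh j l = 0) := by
  refine ⟨fun _ => 0,
    fun j l => (2 * xh j l - 1) * (α l - C j l - β l * (∑ i ∈ Finset.univ.erase j, xh i l)
      - 2 * β l * xh j l),
    fun _ _ => 0, fun _ _ => 0,
    fun _ => le_refl 0, fun _ _ => le_refl 0, fun _ _ => le_refl 0,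
    fun j l => ?_, fun j => by linarith [hknap j], fun j => by ring,
    fun j l => ?_, fun j l => ?_, fun j l => ?_⟩
  · rcases hbin j l with h | h <;> simp only [h] <;> ring
  · rcases hbin j l with h | h <;> simp only [h] <;> ring
  · rcases hbin j l with h | h <;> simp only [h] <;> norm_num
  · rcases hbin j l with h | h <;> simp only [h] <;> norm_num
end

section
/- The KKT system for the binary knapsack Nash-Cournot game does not characterize equilibria: there exist parameter data and a feasible binary point x̂ that satisfies the aggregated KKT conditions of the complementarity reformulation (by the previous construction) yet fails the Nash equilibrium condition, i.e., some player j has a feasible deviation x_j with strictly larger payoff p̃_j(x_j, x̂_{−j}) > p̃_j(x̂_j, x̂_{−j}). -/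
/-- The KKT system of the complementarity reformulation does not characterize equilibria:
there are data and a feasible binary point satisfying the KKT system that is not a Nash
equilibrium (a profitable feasible deviation exists). Witness: one player, one item. -/
theorem stmt13 :
    ∃ (α β C a b : ℝ) (xh : ℝ),
      (xh = 0 ∨ xh = 1) ∧ a * xh ≤ b ∧
      (∃ πm γ μ ν : ℝ,
        0 ≤ πm ∧ 0 ≤ μ ∧ 0 ≤ ν ∧
        α - C - 2 * β * xh - πm * a + γ - 2 * γ * xh - μ + ν = 0 ∧
        0 ≤ b - a * xh ∧ πm * (b - a * xh) = 0 ∧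
        γ * (xh * (1 - xh)) = 0 ∧
        0 ≤ 1 - xh ∧ μ * (1 - xh) = 0 ∧ ν * xh = 0) ∧
      (∃ x : ℝ, (x = 0 ∨ x = 1) ∧ a * x ≤ b ∧
        ((α - β * x) - C) * x > ((α - β * xh) - C) * xh) := by
  refine ⟨2, 0, 1, 1, 1, 0, Or.inl rfl, by norm_num,
    ⟨0, -1, 0, 0, le_refl 0, le_refl 0, le_refl 0, by norm_num, by norm_num,
      by norm_num, by norm_num, by norm_num, by norm_num, by norm_num⟩,
    ⟨1, Or.inr rfl, by norm_num, by norm_num⟩⟩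
end
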